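/- Let Γ be a finite simple graph each of whose edges is colored red, green, or blue, with R red edges, G green edges, and B blue edges, and suppose the number of rainbow triangles of Γ equals √(2·R·G·B) and is positive. Then every edge of Γ belongs to at least one rainbow triangle. -/

import Mathlib

/-!
Each rainbow triangle can be ordered as `(u, v, w)` with `uv` red, `uw` blue and `vw` green, so
the number `T` of rainbow triangles is at most `∑ d⁺(u, v)` over ordered red pairs `(u, v)`.
By Cauchy–Schwarz, `T² ≤ 2R · ∑ d⁺(u, v)²`, and the last sum counts tuples `(u, v, x, y)`, each
determined by its blue edge `uy` and its green edge `vx`; hence `T² ≤ 2RGB` for every colored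
graph. If an edge lay in no rainbow triangle, deleting it would keep `T` and strictly decrease
`2RGB`, which is positive because `T > 0`; so equality `T² = 2RGB` forbids such an edge.
-/

open scoped Classical

noncomputable section

namespace RainbowTri

variable {V : Type*} [Fintype V]

/-- The finset of edges of `Γ` having color `c` (red = 0, green = 1, blue = 2). -/
def colorEdges (Γ : SimpleGraph V) (col : Sym2 V → Fin 3) (c : Fin 3) : Finset (Sym2 V) :=
  Finset.univ.filter (fun e => e ∈ Γ.edgeSet ∧ col e = c)

/-- The finset of rainbow triangles: 3-sets of pairwise adjacent vertices whose three
edges receive three distinct colors. -/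
def rainbowTriangles (Γ : SimpleGraph V) (col : Sym2 V → Fin 3) : Finset (Finset V) :=
  Finset.univ.filter (fun s => ∃ a b c : V, s = {a, b, c} ∧
    Γ.Adj a b ∧ Γ.Adj a c ∧ Γ.Adj b c ∧
    col s(a, b) ≠ col s(a, c) ∧ col s(a, b) ≠ col s(b, c) ∧ col s(a, c) ≠ col s(b, c))

/-- The finset of properly 3-edge-colored copies of `K₄`: 4-sets of pairwise adjacent
vertices on which each color appears on exactly two (disjoint) of the six edges. -/
def properK4s (Γ : SimpleGraph V) (col : Sym2 V → Fin 3) : Finset (Finset V) :=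
  Finset.univ.filter (fun s => ∃ a b c d : V, s = {a, b, c, d} ∧
    Γ.Adj a b ∧ Γ.Adj a c ∧ Γ.Adj a d ∧ Γ.Adj b c ∧ Γ.Adj b d ∧ Γ.Adj c d ∧
    col s(a, b) = col s(c, d) ∧ col s(a, c) = col s(b, d) ∧ col s(a, d) = col s(b, c) ∧
    col s(a, b) ≠ col s(a, c) ∧ col s(a, b) ≠ col s(a, d) ∧ col s(a, c) ≠ col s(a, d))

/-- The color pattern of a proper 3-edge-coloring of `K₄` on vertex set `Fin 4`:
opposite edges get the same color ({0,1},{2,3} ↦ 0; {0,2},{1,3} ↦ 1; {0,3},{1,2} ↦ 2). -/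
def pairColor (i j : Fin 4) : Fin 3 :=
  ⟨((i.val ^^^ j.val) - 1) % 3, Nat.mod_lt _ (by norm_num)⟩

/-- `Γ` (with edge coloring `col`) is obtained from a blowup of a properly
3-edge-colored `K₄` by possibly adding a set of isolated vertices: vertices mapped to
`none` are isolated, vertices are adjacent iff they lie in distinct parts, and colors
between parts follow the proper `K₄`-pattern up to a permutation `σ` of the colors. -/
def IsBlowupK4PlusIsolated (Γ : SimpleGraph V) (col : Sym2 V → Fin 3) : Prop :=
  ∃ (P : V → Option (Fin 4)) (σ : Equiv.Perm (Fin 3)),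
    (∀ u v : V, Γ.Adj u v ↔ ∃ i j : Fin 4, i ≠ j ∧ P u = some i ∧ P v = some j) ∧
    (∀ (u v : V) (i j : Fin 4), P u = some i → P v = some j → Γ.Adj u v →
      col s(u, v) = σ (pairColor i j))

/-- As `IsBlowupK4PlusIsolated`, where moreover the four parts have equal size. -/
def IsBalancedBlowupK4PlusIsolated (Γ : SimpleGraph V) (col : Sym2 V → Fin 3) : Prop :=
  ∃ (P : V → Option (Fin 4)) (σ : Equiv.Perm (Fin 3)),
    (∀ u v : V, Γ.Adj u v ↔ ∃ i j : Fin 4, i ≠ j ∧ P u = some i ∧ P v = some j) ∧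
    (∀ (u v : V) (i j : Fin 4), P u = some i → P v = some j → Γ.Adj u v →
      col s(u, v) = σ (pairColor i j)) ∧
    (∀ i j : Fin 4, (Finset.univ.filter (fun v => P v = some i)).card
      = (Finset.univ.filter (fun v => P v = some j)).card)

/-- `Γ` (with edge coloring `col`) is a balanced blowup of a properly 3-edge-colored
`K₄` (no extra isolated vertices). -/
def IsBalancedBlowupK4 (Γ : SimpleGraph V) (col : Sym2 V → Fin 3) : Prop :=
  ∃ (P : V → Fin 4) (σ : Equiv.Perm (Fin 3)),
    (∀ u v : V, Γ.Adj u v ↔ P u ≠ P v) ∧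
    (∀ u v : V, Γ.Adj u v → col s(u, v) = σ (pairColor (P u) (P v))) ∧
    (∀ i j : Fin 4, (Finset.univ.filter (fun v => P v = i)).card
      = (Finset.univ.filter (fun v => P v = j)).card)

/-- `d⁺(u,v)`: the number of vertices `w` with `uw` blue and `vw` green. -/
def dPlus (Γ : SimpleGraph V) (col : Sym2 V → Fin 3) (u v : V) : ℕ :=
  (Finset.univ.filter (fun w => Γ.Adj u w ∧ col s(u, w) = 2 ∧
    Γ.Adj v w ∧ col s(v, w) = 1)).card

/-- `d⁻(u,v)`: the number of vertices `w` with `uw` green and `vw` blue. -/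
def dMinus (Γ : SimpleGraph V) (col : Sym2 V → Fin 3) (u v : V) : ℕ :=
  (Finset.univ.filter (fun w => Γ.Adj u w ∧ col s(u, w) = 1 ∧
    Γ.Adj v w ∧ col s(v, w) = 2)).card

/-- `d_K(u,v)`: the number of ordered pairs `(w,x)` with `wx` red, `uw`, `vx` green
and `ux`, `vw` blue. -/
def dK (Γ : SimpleGraph V) (col : Sym2 V → Fin 3) (u v : V) : ℕ :=
  (Finset.univ.filter (fun p : V × V => Γ.Adj p.1 p.2 ∧ col s(p.1, p.2) = 0 ∧
    Γ.Adj u p.1 ∧ col s(u, p.1) = 1 ∧ Γ.Adj v p.2 ∧ col s(v, p.2) = 1 ∧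
    Γ.Adj u p.2 ∧ col s(u, p.2) = 2 ∧ Γ.Adj v p.1 ∧ col s(v, p.1) = 2)).card

/-- Ordered pairs of vertices inducing a red edge. -/
def redPairs (Γ : SimpleGraph V) (col : Sym2 V → Fin 3) : Finset (V × V) :=
  Finset.univ.filter (fun p => Γ.Adj p.1 p.2 ∧ col s(p.1, p.2) = 0)

/-- The set `S` of ordered tuples `(u,v,x,y)` with `uv` red, `ux`, `uy` blue and
`vx`, `vy` green (`x = y` allowed). -/
def tupleSet (Γ : SimpleGraph V) (col : Sym2 V → Fin 3) : Finset (V × V × V × V) :=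
  Finset.univ.filter (fun t => Γ.Adj t.1 t.2.1 ∧ col s(t.1, t.2.1) = 0 ∧
    Γ.Adj t.1 t.2.2.1 ∧ col s(t.1, t.2.2.1) = 2 ∧
    Γ.Adj t.1 t.2.2.2 ∧ col s(t.1, t.2.2.2) = 2 ∧
    Γ.Adj t.2.1 t.2.2.1 ∧ col s(t.2.1, t.2.2.1) = 1 ∧
    Γ.Adj t.2.1 t.2.2.2 ∧ col s(t.2.1, t.2.2.2) = 1)

lemma distinct_colors_cases {x y z : Fin 3} (hxy : x ≠ y) (hxz : x ≠ z) (hyz : y ≠ z) :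
    (x = 0 ∧ y = 2 ∧ z = 1) ∨ (x = 0 ∧ y = 1 ∧ z = 2) ∨ (x = 2 ∧ y = 0 ∧ z = 1) ∨
      (x = 1 ∧ y = 0 ∧ z = 2) ∨ (x = 2 ∧ y = 1 ∧ z = 0) ∨ (x = 1 ∧ y = 2 ∧ z = 0) := by
  revert x y z
  decide

section

variable (Γ : SimpleGraph V) (col : Sym2 V → Fin 3)

def colorSubgraph (c : Fin 3) : SimpleGraph V where
  Adj u v := Γ.Adj u v ∧ col s(u, v) = c
  symm := ⟨fun _ _ h => ⟨h.1.symm, Sym2.eq_swap (α := V) ▸ h.2⟩⟩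

lemma edgeFinset_colorSubgraph (c : Fin 3) :
    (colorSubgraph Γ col c).edgeFinset = colorEdges Γ col c := by
  ext e
  induction e using Sym2.ind
  rw [SimpleGraph.mem_edgeFinset]
  simp [colorSubgraph, colorEdges]

lemma card_redPairs : (redPairs Γ col).card = 2 * (colorEdges Γ col 0).card := by
  rw [← edgeFinset_colorSubgraph, SimpleGraph.two_mul_card_edgeFinset]
  unfold redPairs colorSubgraph
  -- the two filters differ only in their decidability instances
  convert rfl

def orientedRainbowTriangles : Finset (V × V × V) :=
  Finset.univ.filter (fun t => Γ.Adj t.1 t.2.1 ∧ col s(t.1, t.2.1) = 0 ∧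
    Γ.Adj t.1 t.2.2 ∧ col s(t.1, t.2.2) = 2 ∧
    Γ.Adj t.2.1 t.2.2 ∧ col s(t.2.1, t.2.2) = 1)

lemma card_rainbowTriangles_le_card_orientedRainbowTriangles :
    (rainbowTriangles Γ col).card ≤ (orientedRainbowTriangles Γ col).card := by
  refine Finset.card_le_card_of_surjOn (fun t => {t.1, t.2.1, t.2.2}) fun s hs => ?_
  simp only [rainbowTriangles, Finset.coe_filter, Finset.mem_univ, true_and] at hs
  obtain ⟨a, b, c, rfl, hab, hac, hbc, hcol⟩ := hs
  obtain ⟨t, hperm, ht⟩ : ∃ t ∈ [(a, b, c), (b, a, c), (a, c, b), (c, a, b), (b, c, a), (c, b, a)],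
      t ∈ orientedRainbowTriangles Γ col := by
    simp only [List.exists_mem_cons_iff, List.not_mem_nil, false_and, exists_false, or_false]
    rcases distinct_colors_cases hcol.1 hcol.2.1 hcol.2.2 with h | h | h | h | h | h <;>
      simp_all [orientedRainbowTriangles, Sym2.eq_swap, hab.symm, hac.symm, hbc.symm]
  refine ⟨t, ht, ?_⟩
  simp only [List.mem_cons, List.not_mem_nil, or_false] at hperm
  rcases hperm with rfl | rfl | rfl | rfl | rfl | rfl <;> ext <;> simp <;> tauto

lemma card_orientedRainbowTriangles :
    (orientedRainbowTriangles Γ col).card = ∑ p ∈ redPairs Γ col, dPlus Γ col p.1 p.2 := by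
  simp only [orientedRainbowTriangles, redPairs, dPlus, Finset.card_filter, Finset.sum_filter,
    Fintype.sum_prod_type]
  refine Finset.sum_congr rfl fun u _ => Finset.sum_congr rfl fun v _ => ?_
  split_ifs with h
  · simp [h]
  · simp_all

lemma sum_dPlus_sq :
    ∑ p ∈ redPairs Γ col, dPlus Γ col p.1 p.2 ^ 2 = (tupleSet Γ col).card := by
  simp only [tupleSet, redPairs, dPlus, Finset.card_filter, Finset.sum_filter,
    Fintype.sum_prod_type, sq, Finset.sum_mul_sum]
  refine Finset.sum_congr rfl fun u _ => Finset.sum_congr rfl fun v _ => ?_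
  split_ifs with h
  · refine Finset.sum_congr rfl fun x _ => Finset.sum_congr rfl fun y _ => ?_
    simp only [h, true_and, ite_zero_mul_ite_zero, mul_one]
    exact if_congr (by tauto) rfl rfl
  · exact (Finset.sum_eq_zero fun x _ => Finset.sum_eq_zero fun y _ =>
      if_neg fun hy => h ⟨hy.1, hy.2.1⟩).symm

lemma card_tupleSet_le :
    (tupleSet Γ col).card ≤ (colorEdges Γ col 2).card * (colorEdges Γ col 1).card := by
  rw [← Finset.card_product]
  refine Finset.card_le_card_of_injOn (fun t => (s(t.1, t.2.2.2), s(t.2.1, t.2.2.1))) ?_ ?_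
  · rintro ⟨u, v, x, y⟩ ht
    simp_all [tupleSet, colorEdges]
  · rintro ⟨u, v, x, y⟩ ht ⟨u', v', x', y'⟩ ht' h
    simp only [tupleSet, Finset.coe_filter, Set.mem_ofPred_eq, Prod.mk.injEq, Sym2.eq_iff]
      at ht ht' h
    -- a swapped identification would give some edge two different colors
    rcases h with ⟨⟨rfl, rfl⟩ | ⟨rfl, rfl⟩, ⟨rfl, rfl⟩ | ⟨rfl, rfl⟩⟩ <;>
      simp_all [Sym2.eq_swap]

lemma sq_card_rainbowTriangles_le :
    (rainbowTriangles Γ col).card ^ 2 ≤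
      2 * (colorEdges Γ col 0).card * (colorEdges Γ col 1).card * (colorEdges Γ col 2).card :=
  calc (rainbowTriangles Γ col).card ^ 2
      ≤ (∑ p ∈ redPairs Γ col, dPlus Γ col p.1 p.2) ^ 2 := by
        rw [← card_orientedRainbowTriangles]
        exact Nat.pow_le_pow_left (card_rainbowTriangles_le_card_orientedRainbowTriangles Γ col) 2
    _ ≤ (redPairs Γ col).card * ∑ p ∈ redPairs Γ col, dPlus Γ col p.1 p.2 ^ 2 :=
        sq_sum_le_card_mul_sum_sq
    _ ≤ 2 * (colorEdges Γ col 0).card *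
          ((colorEdges Γ col 2).card * (colorEdges Γ col 1).card) := by
        rw [card_redPairs, sum_dPlus_sq]
        exact Nat.mul_le_mul_left _ (card_tupleSet_le Γ col)
    _ = _ := by ring

lemma rainbowTriangles_subset_deleteEdges {u v : V}
    (h : ¬∃ w, Γ.Adj u w ∧ Γ.Adj v w ∧ col s(u, v) ≠ col s(u, w) ∧ col s(u, v) ≠ col s(v, w) ∧
      col s(u, w) ≠ col s(v, w)) :
    rainbowTriangles Γ col ⊆ rainbowTriangles (Γ.deleteEdges {s(u, v)}) col := by
  have hne : ∀ x y z, Γ.Adj x y → Γ.Adj x z → Γ.Adj y z → col s(x, y) ≠ col s(x, z) →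
      col s(x, y) ≠ col s(y, z) → col s(x, z) ≠ col s(y, z) → s(x, y) ≠ s(u, v) := by
    intro x y z hxy hxz hyz h1 h2 h3 he
    rcases Sym2.eq_iff.mp he with ⟨rfl, rfl⟩ | ⟨rfl, rfl⟩
    · exact h ⟨z, hxz, hyz, h1, h2, h3⟩
    · exact h ⟨z, hyz, hxz, by rwa [Sym2.eq_swap], by rwa [Sym2.eq_swap], h3.symm⟩
  intro s hs
  simp only [rainbowTriangles, Finset.mem_filter, Finset.mem_univ, true_and] at hs ⊢
  obtain ⟨a, b, c, rfl, hab, hac, hbc, h1, h2, h3⟩ := hs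
  refine ⟨a, b, c, rfl, ?_, ?_, ?_, h1, h2, h3⟩ <;> rw [SimpleGraph.deleteEdges_adj] <;>
    refine ⟨by assumption, ?_⟩ <;> rw [Set.mem_singleton_iff]
  · exact hne a b c hab hac hbc h1 h2 h3
  · have scb : s(c, b) = s(b, c) := Sym2.eq_swap
    exact hne a c b hac hab hbc.symm h1.symm (by rw [scb]; exact h3) (by rw [scb]; exact h2)
  · have sba : s(b, a) = s(a, b) := Sym2.eq_swap
    have sca : s(c, a) = s(a, c) := Sym2.eq_swap
    exact hne b c a hbc hab.symm hac.symm (by rw [sba]; exact h2.symm) (by rw [sca]; exact h3.symm)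
      (by rw [sba, sca]; exact h1)

lemma colorEdges_deleteEdges (e : Sym2 V) (c : Fin 3) :
    colorEdges (Γ.deleteEdges {e}) col c = (colorEdges Γ col c).erase e := by
  ext
  simp only [colorEdges, Finset.mem_filter, Finset.mem_univ, true_and, Finset.mem_erase,
    SimpleGraph.edgeSet_deleteEdges, Set.mem_sdiff, Set.mem_singleton_iff]
  tauto

end

lemma prod_lt_prod_of_le_of_lt {ι : Type*} [Fintype ι] {f g : ι → ℕ} (hg : ∀ j, 0 < g j)
    (hle : ∀ j, f j ≤ g j) {i : ι} (hlt : f i < g i) : ∏ j, f j < ∏ j, g j := by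
  by_cases hf : ∀ j, 0 < f j
  · exact Finset.prod_lt_prod (fun j _ => hf j) (fun j _ => hle j) ⟨i, Finset.mem_univ _, hlt⟩
  · push Not at hf
    obtain ⟨j, hj⟩ := hf
    rw [Finset.prod_eq_zero (Finset.mem_univ j) (Nat.le_zero.mp hj)]
    exact Finset.prod_pos fun j _ => hg j

/-- If a 3-edge-colored graph has exactly `√(2·R·G·B) > 0` rainbow triangles, then
every edge belongs to at least one rainbow triangle. -/
theorem stmt12 (Γ : SimpleGraph V) (col : Sym2 V → Fin 3) (R G B T : ℕ)
    (hR : R = (colorEdges Γ col 0).card)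
    (hG : G = (colorEdges Γ col 1).card)
    (hB : B = (colorEdges Γ col 2).card)
    (hT : T = (rainbowTriangles Γ col).card)
    (heq : (T : ℝ) = Real.sqrt (2 * R * G * B))
    (hpos : 0 < T) :
    ∀ u v : V, Γ.Adj u v → ∃ w : V, Γ.Adj u w ∧ Γ.Adj v w ∧
      col s(u, v) ≠ col s(u, w) ∧ col s(u, v) ≠ col s(v, w) ∧
      col s(u, w) ≠ col s(v, w) := by
  intro u v huv
  by_contra hno
  set Γ' := Γ.deleteEdges {s(u, v)}
  have hsq : T ^ 2 = 2 * ∏ c, (colorEdges Γ col c).card := by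
    rw [Fin.prod_univ_three, ← hR, ← hG, ← hB, ← mul_assoc, ← mul_assoc]
    exact_mod_cast (heq ▸ Real.sq_sqrt (by positivity) : (T : ℝ) ^ 2 = 2 * R * G * B)
  have hcolor_pos : ∀ c, 0 < (colorEdges Γ col c).card := by
    have hprod : 0 < ∏ c, (colorEdges Γ col c).card := by
      have := pow_pos hpos 2
      omega
    exact fun c => Nat.pos_of_ne_zero (Finset.prod_ne_zero_iff.mp hprod.ne' c (Finset.mem_univ c))
  have hdrop : ∏ c, (colorEdges Γ' col c).card < ∏ c, (colorEdges Γ col c).card := by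
    simp only [Γ', colorEdges_deleteEdges]
    refine prod_lt_prod_of_le_of_lt hcolor_pos (fun c => Finset.card_erase_le)
      (i := col s(u, v)) (Finset.card_erase_lt_of_mem ?_)
    simpa [colorEdges] using huv
  have hkeep : T ≤ (rainbowTriangles Γ' col).card :=
    hT ▸ Finset.card_le_card (rainbowTriangles_subset_deleteEdges Γ col hno)
  have hbound : (rainbowTriangles Γ' col).card ^ 2 ≤ 2 * ∏ c, (colorEdges Γ' col c).card := by
    rw [Fin.prod_univ_three, ← mul_assoc, ← mul_assoc]
    exact sq_card_rainbowTriangles_le Γ' col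
  nlinarith [Nat.pow_le_pow_left hkeep 2]

end RainbowTri
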